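/- arXiv:2209.06403 — 2 statements merged into one kernel-verified Lean document; each statement's English description precedes it below -/
import Mathlib

section
/- Let T be a Lie triple system, V a vector space, and θ, ϑ ∈ Z³(T,V) cocycles such that Ann(T_θ) = Ann(T_ϑ) = V (i.e., Rad ∩ Ann(T) = 0 for both). Then T_θ ≅ T_ϑ if and only if there exist φ ∈ Aut(T) and ψ ∈ GL(V) such that [φθ] = [ψϑ] in H³(T,V). -/
structure LTS (F : Type*) [Field F] (T : Type*) [AddCommGroup T] [Module F T] where
  br : T → T → T → T
  add₁ : ∀ a b y z, br (a + b) y z = br a y z + br b y z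
  smul₁ : ∀ (c : F) (a y z : T), br (c • a) y z = c • br a y z
  add₂ : ∀ x a b z, br x (a + b) z = br x a z + br x b z
  smul₂ : ∀ (c : F) (x a z : T), br x (c • a) z = c • br x a z
  add₃ : ∀ x y a b, br x y (a + b) = br x y a + br x y b
  smul₃ : ∀ (c : F) (x y a : T), br x y (c • a) = c • br x y a
  A1 : ∀ x y z, br x y z + br y x z = 0
  A2 : ∀ x y z, br x y z + br y z x + br z x y = 0
  A3 : ∀ u v x y z, br u v (br x y z) = br (br u v x) y z + br x (br u v y) z + br x y (br u v z)

/-- A trilinear map between modules. -/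
def Trilinear (F : Type*) [Field F] {T V : Type*} [AddCommGroup T] [Module F T]
    [AddCommGroup V] [Module F V] (θ : T → T → T → V) : Prop :=
  (∀ a b y z, θ (a + b) y z = θ a y z + θ b y z) ∧
  (∀ (c : F) (a y z : T), θ (c • a) y z = c • θ a y z) ∧
  (∀ x a b z, θ x (a + b) z = θ x a z + θ x b z) ∧
  (∀ (c : F) (x a z : T), θ x (c • a) z = c • θ x a z) ∧
  (∀ x y a b, θ x y (a + b) = θ x y a + θ x y b) ∧
  (∀ (c : F) (x y a : T), θ x y (c • a) = c • θ x y a)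

/-- A cocycle: a trilinear map satisfying (B1)–(B3). -/
def IsCocycle (F : Type*) [Field F] {T V : Type*} [AddCommGroup T] [Module F T]
    [AddCommGroup V] [Module F V] (L : LTS F T) (θ : T → T → T → V) : Prop :=
  Trilinear F θ ∧
  (∀ x y z, θ x y z + θ y x z = 0) ∧
  (∀ x y z, θ x y z + θ y z x + θ z x y = 0) ∧
  (∀ u v x y z,
    θ u v (L.br x y z) + θ (L.br v u x) y z + θ x (L.br v u y) z + θ x y (L.br v u z) = 0)

/-- The bracket of the annihilator extension `T ⊕ V`. -/
def extBr (F : Type*) [Field F] {T V : Type*} [AddCommGroup T] [Module F T]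
    [AddCommGroup V] [Module F V] (L : LTS F T) (θ : T → T → T → V) :
    T × V → T × V → T × V → T × V :=
  fun p q r => (L.br p.1 q.1 r.1, θ p.1 q.1 r.1)

/-- The annihilator of a Lie triple system, as a set. -/
def AnnSet (F : Type*) [Field F] {T : Type*} [AddCommGroup T] [Module F T]
    (L : LTS F T) : Set T :=
  {x | ∀ y z, L.br x y z = 0}

/-- The radical of a trilinear map. -/
def RadSet (F : Type*) [Field F] {T V : Type*} [AddCommGroup T] [Module F T]
    [AddCommGroup V] [Module F V] (θ : T → T → T → V) : Set T :=
  {x | ∀ y z, θ x y z = 0}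

/-- The lower central series `T⁽⁰⁾ = T`, `T⁽ⁿ⁺¹⁾ = [T⁽ⁿ⁾, T, T]`. -/
def derSeq (F : Type*) [Field F] {T : Type*} [AddCommGroup T] [Module F T]
    (L : LTS F T) : ℕ → Submodule F T
  | 0 => ⊤
  | n + 1 => Submodule.span F {w | ∃ a ∈ derSeq F L n, ∃ y z : T, w = L.br a y z}

/-- A Lie triple system is nilpotent if its lower central series terminates. -/
def IsNilpotentLTS (F : Type*) [Field F] {T : Type*} [AddCommGroup T] [Module F T]
    (L : LTS F T) : Prop :=
  ∃ m, derSeq F L m = ⊥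

/-- Isomorphism of Lie triple systems. -/
def LTSIso (F : Type*) [Field F] {T₁ T₂ : Type*} [AddCommGroup T₁] [Module F T₁]
    [AddCommGroup T₂] [Module F T₂] (L₁ : LTS F T₁) (L₂ : LTS F T₂) : Prop :=
  ∃ e : T₁ ≃ₗ[F] T₂, ∀ x y z, e (L₁.br x y z) = L₂.br (e x) (e y) (e z)

/-- A coboundary: a map of the form `δf(x,y,z) = f([x,y,z])`. -/
def IsCoboundary (F : Type*) [Field F] {T V : Type*} [AddCommGroup T] [Module F T]
    [AddCommGroup V] [Module F V] (L : LTS F T) (θ : T → T → T → V) : Prop :=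
  ∃ f : T →ₗ[F] V, ∀ x y z, θ x y z = f (L.br x y z)


/-!
An isomorphism of Lie triple systems maps annihilator onto annihilator, and the hypothesis
`Rad ∩ Ann(T) = 0` says exactly that `Ann(T_θ) = V`. So an isomorphism `T_ϑ ≅ T_θ` preserves
`V` in both directions, i.e. it is block triangular, `(x, v) ↦ (φ x, ψ v + f x)`. Comparing the
`V`-components of the brackets of `(x, 0), (y, 0), (z, 0)` on both sides shows that such a map
is an isomorphism iff `φ ∈ Aut(T)` and `θ ∘ φ - ψ ∘ ϑ = f ∘ [·, ·, ·]`.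
-/

section Triangular

variable {R M N : Type*} [Ring R] [AddCommGroup M] [Module R M] [AddCommGroup N] [Module R N]

lemma LinearEquiv.fst_symm_fst_inl (g : (M × N) ≃ₗ[R] (M × N))
    (hg : ∀ v : N, (g.symm (0, v)).1 = 0) (x : M) : (g.symm ((g (x, 0)).1, 0)).1 = x := by
  have hsplit : ((g (x, 0)).1, (0 : N)) = g (x, 0) - (0, (g (x, 0)).2) := by ext <;> simp
  simp [hsplit, hg]

lemma LinearEquiv.snd_symm_snd_inr (g : (M × N) ≃ₗ[R] (M × N))
    (hg : ∀ v : N, (g (0, v)).1 = 0) (v : N) : (g.symm (0, (g (0, v)).2)).2 = v := by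
  have hg0 : ((0 : M), (g (0, v)).2) = g (0, v) := Prod.ext (hg v).symm rfl
  simp [hg0]

lemma LinearEquiv.exists_eq_skewProd (g : (M × N) ≃ₗ[R] (M × N))
    (hg : ∀ v : N, (g (0, v)).1 = 0) (hg' : ∀ v : N, (g.symm (0, v)).1 = 0) :
    ∃ (φ : M ≃ₗ[R] M) (ψ : N ≃ₗ[R] N) (f : M →ₗ[R] N), g = φ.skewProd ψ f := by
  let φ : M ≃ₗ[R] M := .ofLinearMap
    (LinearMap.fst R M N ∘ₗ g.toLinearMap ∘ₗ LinearMap.inl R M N)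
    (LinearMap.fst R M N ∘ₗ g.symm.toLinearMap ∘ₗ LinearMap.inl R M N)
    (LinearMap.ext fun x => by simpa using g.symm.fst_symm_fst_inl (by simpa using hg) x)
    (LinearMap.ext fun x => g.fst_symm_fst_inl hg' x)
  let ψ : N ≃ₗ[R] N := .ofLinearMap
    (LinearMap.snd R M N ∘ₗ g.toLinearMap ∘ₗ LinearMap.inr R M N)
    (LinearMap.snd R M N ∘ₗ g.symm.toLinearMap ∘ₗ LinearMap.inr R M N)
    (LinearMap.ext fun v => by simpa using g.symm.snd_symm_snd_inr hg' v)
    (LinearMap.ext fun v => g.snd_symm_snd_inr hg v)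
  refine ⟨φ, ψ, LinearMap.snd R M N ∘ₗ g.toLinearMap ∘ₗ LinearMap.inl R M N, ?_⟩
  ext ⟨x, v⟩
  · have hfst : (g (x, v)).1 = (g (x, 0)).1 + (g (0, v)).1 := by
      rw [← Prod.fst_add, ← map_add, Prod.mk_add_mk, add_zero, zero_add]
    simp [φ, hfst, hg]
  · have hsnd : (g (x, v)).2 = (g (0, v)).2 + (g (x, 0)).2 := by
      rw [← Prod.snd_add, ← map_add, Prod.mk_add_mk, add_zero, zero_add]
    simp [ψ, hsnd]

end Triangular

section LieTripleSystem

variable {F : Type*} [Field F] {T T₁ T₂ V : Type*} [AddCommGroup T] [Module F T]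
  [AddCommGroup T₁] [Module F T₁] [AddCommGroup T₂] [Module F T₂]
  [AddCommGroup V] [Module F V]

lemma LTS.br_zero_left (L : LTS F T) (y z : T) : L.br 0 y z = 0 := by
  simpa using L.smul₁ 0 0 y z

lemma LinearEquiv.symm_map_br {L₁ : LTS F T₁} {L₂ : LTS F T₂} (e : T₁ ≃ₗ[F] T₂)
    (he : ∀ x y z, e (L₁.br x y z) = L₂.br (e x) (e y) (e z)) (x y z : T₂) :
    e.symm (L₂.br x y z) = L₁.br (e.symm x) (e.symm y) (e.symm z) :=
  e.symm_apply_eq.mpr (by simp [he])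

lemma LTSIso.symm {L₁ : LTS F T₁} {L₂ : LTS F T₂} (h : LTSIso F L₁ L₂) :
    LTSIso F L₂ L₁ :=
  let ⟨e, he⟩ := h
  ⟨e.symm, e.symm_map_br he⟩

lemma LinearEquiv.map_mem_annSet {L₁ : LTS F T₁} {L₂ : LTS F T₂} (e : T₁ ≃ₗ[F] T₂)
    (he : ∀ x y z, e (L₁.br x y z) = L₂.br (e x) (e y) (e z)) {x : T₁}
    (hx : x ∈ AnnSet F L₁) : e x ∈ AnnSet F L₂ := fun y z => by
  have h := he x (e.symm y) (e.symm z)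
  rwa [hx, map_zero, e.apply_symm_apply, e.apply_symm_apply, eq_comm] at h

lemma zero_mk_mem_annSet {L : LTS F T} {θ : T → T → T → V} {E : LTS F (T × V)}
    (hE : E.br = extBr F L θ) (v : V) : ((0 : T), v) ∈ AnnSet F E := fun q r => by
  -- `extBr` only sees first components
  have hv : E.br (0, v) q r = E.br 0 q r := by simp [hE, extBr]
  rw [hv, E.br_zero_left]

lemma fst_eq_zero_of_mem_annSet {L : LTS F T} {θ : T → T → T → V}
    (hθann : RadSet F θ ∩ AnnSet F L = {0}) {E : LTS F (T × V)} (hE : E.br = extBr F L θ)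
    {p : T × V} (hp : p ∈ AnnSet F E) : p.1 = 0 := by
  have hbr : ∀ y z, L.br p.1 y z = 0 ∧ θ p.1 y z = 0 := fun y z => by
    simpa [hE, extBr, Prod.ext_iff] using hp (y, 0) (z, 0)
  have hmem : p.1 ∈ RadSet F θ ∩ AnnSet F L :=
    ⟨fun y z => (hbr y z).2, fun y z => (hbr y z).1⟩
  rwa [hθann] at hmem

lemma LinearEquiv.fst_apply_zero_mk {L : LTS F T} {θ ϑ : T → T → T → V}
    (hϑann : RadSet F ϑ ∩ AnnSet F L = {0}) {E E' : LTS F (T × V)}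
    (hE : E.br = extBr F L θ) (hE' : E'.br = extBr F L ϑ) (g : (T × V) ≃ₗ[F] (T × V))
    (hg : ∀ p q r, g (E.br p q r) = E'.br (g p) (g q) (g r)) (v : V) : (g (0, v)).1 = 0 :=
  fst_eq_zero_of_mem_annSet hϑann hE' (g.map_mem_annSet hg (zero_mk_mem_annSet hE v))

lemma skewProd_map_extBr_iff {L : LTS F T} {θ ϑ : T → T → T → V}
    (φ : T ≃ₗ[F] T) (ψ : V ≃ₗ[F] V) (f : T →ₗ[F] V) :
    (∀ p q r, φ.skewProd ψ f (extBr F L ϑ p q r)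
        = extBr F L θ (φ.skewProd ψ f p) (φ.skewProd ψ f q) (φ.skewProd ψ f r)) ↔
      (∀ x y z, φ (L.br x y z) = L.br (φ x) (φ y) (φ z)) ∧
        ∀ x y z, θ (φ x) (φ y) (φ z) - ψ (ϑ x y z) = f (L.br x y z) := by
  simp only [extBr, LinearEquiv.skewProd_apply, Prod.ext_iff, Prod.forall, forall_and,
    forall_const, sub_eq_iff_eq_add']
  exact and_congr_right' (forall₃_congr fun _ _ _ => eq_comm)

end LieTripleSystem

theorem stmt11_general {F : Type*} [Field F] {T V : Type*} [AddCommGroup T] [Module F T]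
    [AddCommGroup V] [Module F V] (L : LTS F T) (θ ϑ : T → T → T → V)
    (hθann : RadSet F θ ∩ AnnSet F L = {0}) (hϑann : RadSet F ϑ ∩ AnnSet F L = {0})
    (Eθ Eϑ : LTS F (T × V)) (h1 : Eθ.br = extBr F L θ) (h2 : Eϑ.br = extBr F L ϑ) :
    LTSIso F Eθ Eϑ ↔
      ∃ (φ : T ≃ₗ[F] T) (ψ : V ≃ₗ[F] V),
        (∀ x y z, φ (L.br x y z) = L.br (φ x) (φ y) (φ z)) ∧
        IsCoboundary F L (fun x y z => θ (φ x) (φ y) (φ z) - ψ (ϑ x y z)) := by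
  constructor
  · intro hiso
    obtain ⟨g, hg⟩ := hiso.symm
    obtain ⟨φ, ψ, f, rfl⟩ := g.exists_eq_skewProd (g.fst_apply_zero_mk hθann h2 h1 hg)
      (g.symm.fst_apply_zero_mk hϑann h1 h2 (g.symm_map_br hg))
    rw [h1, h2] at hg
    obtain ⟨hφ, hf⟩ := (skewProd_map_extBr_iff φ ψ f).mp hg
    exact ⟨φ, ψ, hφ, f, hf⟩
  · rintro ⟨φ, ψ, hφ, f, hf⟩
    refine LTSIso.symm ⟨φ.skewProd ψ f, ?_⟩
    rw [h1, h2]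
    exact (skewProd_map_extBr_iff φ ψ f).mpr ⟨hφ, hf⟩

theorem stmt11 {F : Type*} [Field F] {T V : Type*} [AddCommGroup T] [Module F T]
    [AddCommGroup V] [Module F V] (L : LTS F T) (θ ϑ : T → T → T → V)
    (hθ : IsCocycle F L θ) (hϑ : IsCocycle F L ϑ)
    (hθann : RadSet F θ ∩ AnnSet F L = {0}) (hϑann : RadSet F ϑ ∩ AnnSet F L = {0})
    (Eθ Eϑ : LTS F (T × V)) (h1 : Eθ.br = extBr F L θ) (h2 : Eϑ.br = extBr F L ϑ) :
    LTSIso F Eθ Eϑ ↔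
      ∃ (φ : T ≃ₗ[F] T) (ψ : V ≃ₗ[F] V),
        (∀ x y z, φ (L.br x y z) = L.br (φ x) (φ y) (φ z)) ∧
        IsCoboundary F L (fun x y z => θ (φ x) (φ y) (φ z) - ψ (ϑ x y z)) :=
  stmt11_general L θ ϑ hθann hϑann Eθ Eϑ h1 h2
end

section
/- Every non-abelian nilpotent 3-dimensional Lie triple system over any field of characteristic ≠ 2 is isomorphic to the Lie triple system with basis e₁,e₂,e₃ and the only nonzero products (up to the symmetries forced by the axioms) given by [e₁,e₂,e₁] = e₃. -/
/-!
The lower central series of a nilpotent system decreases strictly until it vanishes, and `T⁽¹⁾`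
never has codimension one: if `T = F e + T⁽¹⁾`, then `[e, e, ·] = 0` puts every bracket in
`T⁽²⁾`. In dimension three this forces `dim T⁽¹⁾ = 1` and `T⁽²⁾ = 0`, so all brackets lie in the
annihilator. A nonzero bracket `[x, y, z]` then makes `x, y, [x, y, z]` a basis, hence some
`[u, v, u]` is nonzero; writing `[u, v, v] = γ [u, v, u]`, the basis
`u, v - γ u, [u, v, u]` has the required multiplication table.
-/

namespace LTS

variable {F : Type*} [Field F] {T : Type*} [AddCommGroup T] [Module F T] (L : LTS F T)

lemma br_swap (x y z : T) : L.br y x z = -L.br x y z :=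
  eq_neg_of_add_eq_zero_right (L.A1 x y z)

lemma br_self (h2 : (2 : F) ≠ 0) (x z : T) : L.br x x z = 0 := by
  have h : (2 : F) • L.br x x z = 0 := by rw [two_smul]; exact L.A1 x x z
  exact (smul_eq_zero.mp h).resolve_left h2

lemma br_zero_left_s13 (y z : T) : L.br 0 y z = 0 := by
  simpa using L.smul₁ 0 0 y z

lemma br_zero_mid (x z : T) : L.br x 0 z = 0 := by
  simpa using L.smul₂ 0 x 0 z

variable {L}

lemma br_mid_eq_zero {a : T} (ha : a ∈ AnnSet F L) (x z : T) : L.br x a z = 0 := by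
  rw [br_swap, ha, neg_zero]

lemma br_right_eq_zero {a : T} (ha : a ∈ AnnSet F L) (x y : T) : L.br x y a = 0 := by
  simpa [ha x, br_mid_eq_zero ha] using L.A2 x y a

end LTS

section LowerCentralSeries

variable {F : Type*} [Field F] {T : Type*} [AddCommGroup T] [Module F T] {L : LTS F T}

lemma derSeq_succ (n : ℕ) :
    derSeq F L (n + 1) = Submodule.span F {w | ∃ a ∈ derSeq F L n, ∃ y z : T, w = L.br a y z} :=
  rfl

lemma br_mem_derSeq_succ {n : ℕ} {a : T} (ha : a ∈ derSeq F L n) (y z : T) :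
    L.br a y z ∈ derSeq F L (n + 1) :=
  Submodule.subset_span ⟨a, ha, y, z, rfl⟩

lemma br_mem_derSeq_one (x y z : T) : L.br x y z ∈ derSeq F L 1 :=
  br_mem_derSeq_succ (n := 0) Submodule.mem_top y z

lemma derSeq_antitone : Antitone (derSeq F L) := by
  refine antitone_nat_of_succ_le fun n => ?_
  induction n with
  | zero => exact le_top
  | succ n ih =>
    refine Submodule.span_le.mpr ?_
    rintro _ ⟨a, ha, y, z, rfl⟩
    exact br_mem_derSeq_succ (ih ha) y z

lemma derSeq_eq_bot_of_succ_eq (hnil : IsNilpotentLTS F L) {n : ℕ}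
    (h : derSeq F L (n + 1) = derSeq F L n) : derSeq F L n = ⊥ := by
  have hconst : ∀ k, derSeq F L (n + k) = derSeq F L n := by
    intro k
    induction k with
    | zero => rfl
    | succ k ih => rw [← add_assoc, derSeq_succ, ih, ← derSeq_succ, h]
  obtain ⟨m, hm⟩ := hnil
  rw [← hconst m, ← le_bot_iff, ← hm]
  exact derSeq_antitone (Nat.le_add_left m n)

lemma derSeq_succ_lt (hnil : IsNilpotentLTS F L) {n : ℕ} (hn : derSeq F L n ≠ ⊥) :
    derSeq F L (n + 1) < derSeq F L n :=
  (derSeq_antitone n.le_succ).lt_of_ne fun h => hn (derSeq_eq_bot_of_succ_eq hnil h)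

lemma derSeq_one_ne_bot (hnab : ¬ ∀ x y z, L.br x y z = 0) : derSeq F L 1 ≠ ⊥ := by
  intro h
  refine hnab fun x y z => ?_
  simpa [h] using br_mem_derSeq_one (L := L) x y z

lemma derSeq_one_le_derSeq_two (h2 : (2 : F) ≠ 0) (e : T)
    (he : ∀ x, ∃ c : F, x - c • e ∈ derSeq F L 1) : derSeq F L 1 ≤ derSeq F L 2 := by
  refine Submodule.span_le.mpr ?_
  rintro _ ⟨x, -, y, z, rfl⟩
  obtain ⟨c, hc⟩ := he x
  obtain ⟨c', hc'⟩ := he y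
  have hey : L.br e y z ∈ derSeq F L 2 := by
    rw [← add_sub_cancel (c' • e) y, L.add₂, L.smul₂, L.br_self h2, smul_zero, zero_add,
      L.br_swap]
    exact neg_mem (br_mem_derSeq_succ hc' e z)
  rw [← add_sub_cancel (c • e) x, L.add₁, L.smul₁]
  exact add_mem (Submodule.smul_mem _ c hey) (br_mem_derSeq_succ hc y z)

lemma exists_sub_smul_mem_of_finrank_quotient_le_one [FiniteDimensional F T]
    {p : Submodule F T} (hp : Module.finrank F (T ⧸ p) ≤ 1) :
    ∃ e : T, ∀ x, ∃ c : F, x - c • e ∈ p := by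
  obtain ⟨v, hv⟩ := finrank_le_one_iff.mp hp
  obtain ⟨e, rfl⟩ := p.mkQ_surjective v
  refine ⟨e, fun x => ?_⟩
  obtain ⟨c, hc⟩ := hv (p.mkQ x)
  refine ⟨c, ?_⟩
  rw [← Submodule.ker_mkQ p, LinearMap.mem_ker, map_sub, map_smul, hc, sub_self]

lemma two_le_finrank_quotient_derSeq_one [FiniteDimensional F T] (h2 : (2 : F) ≠ 0)
    (hnil : IsNilpotentLTS F L) (hD1 : derSeq F L 1 ≠ ⊥) :
    2 ≤ Module.finrank F (T ⧸ derSeq F L 1) := by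
  by_contra! hlt
  obtain ⟨e, he⟩ := exists_sub_smul_mem_of_finrank_quotient_le_one (Nat.lt_succ_iff.mp hlt)
  exact hD1 (derSeq_eq_bot_of_succ_eq hnil
    ((derSeq_antitone (Nat.le_succ 1)).antisymm (derSeq_one_le_derSeq_two h2 e he)))

lemma finrank_derSeq_one_eq_one (h2 : (2 : F) ≠ 0)
    (hd : Module.finrank F T = 3) (hnil : IsNilpotentLTS F L) (hD1 : derSeq F L 1 ≠ ⊥) :
    Module.finrank F (derSeq F L 1) = 1 := by
  have : FiniteDimensional F T := Module.finite_of_finrank_eq_succ hd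
  have hsum := (derSeq F L 1).finrank_quotient_add_finrank
  have hpos : Module.finrank F (derSeq F L 1) ≠ 0 := fun h =>
    hD1 (Submodule.finrank_eq_zero.mp h)
  have := two_le_finrank_quotient_derSeq_one h2 hnil hD1
  omega

lemma derSeq_two_eq_bot (h2 : (2 : F) ≠ 0)
    (hd : Module.finrank F T = 3) (hnil : IsNilpotentLTS F L) (hD1 : derSeq F L 1 ≠ ⊥) :
    derSeq F L 2 = ⊥ := by
  have : FiniteDimensional F T := Module.finite_of_finrank_eq_succ hd
  have hlt := Submodule.finrank_lt_finrank_of_lt (derSeq_succ_lt hnil hD1)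
  rw [finrank_derSeq_one_eq_one h2 hd hnil hD1, Nat.lt_one_iff] at hlt
  exact Submodule.finrank_eq_zero.mp hlt

lemma br_mem_annSet_of_derSeq_two_eq_bot (h : derSeq F L 2 = ⊥) (x y z : T) :
    L.br x y z ∈ AnnSet F L := fun a b => by
  simpa [h] using br_mem_derSeq_succ (br_mem_derSeq_one (L := L) x y z) a b

end LowerCentralSeries

lemma Submodule.exists_smul_eq_of_finrank_eq_one {F V : Type*} [Field F] [AddCommGroup V]
    [Module F V] {p : Submodule F V} (hp : Module.finrank F p = 1) {v w : V} (hv : v ∈ p)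
    (hv0 : v ≠ 0) (hw : w ∈ p) : ∃ c : F, w = c • v := by
  obtain ⟨c, hc⟩ := (finrank_eq_one_iff_of_nonzero' (⟨v, hv⟩ : p) (by simpa using hv0)).mp hp
    ⟨w, hw⟩
  exact ⟨c, congrArg Subtype.val hc.symm⟩

section NormalForm

variable {F : Type*} [Field F] {T : Type*} [AddCommGroup T] [Module F T] {L : LTS F T}

lemma linearIndependent_br (h2 : (2 : F) ≠ 0) {x y z : T} (hne : L.br x y z ≠ 0)
    (hann : L.br x y z ∈ AnnSet F L) : LinearIndependent F ![x, y, L.br x y z] := by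
  rw [Fintype.linearIndependent_iff]
  intro g hg
  simp only [Fin.sum_univ_three, Matrix.cons_val_zero, Matrix.cons_val_one,
    Matrix.cons_val_two, Matrix.head_cons, Matrix.tail_cons] at hg
  have hg0 : g 0 = 0 := by
    have := congrArg (fun w => L.br w y z) hg
    simp only [L.add₁, L.smul₁, L.br_self h2, hann y z, L.br_zero_left_s13, smul_zero,
      add_zero] at this
    exact (smul_eq_zero.mp this).resolve_right hne
  have hg1 : g 1 = 0 := by
    have := congrArg (fun w => L.br x w z) hg
    simp only [L.add₂, L.smul₂, L.br_self h2, LTS.br_mid_eq_zero hann, L.br_zero_mid,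
      smul_zero, add_zero, zero_add] at this
    exact (smul_eq_zero.mp this).resolve_right hne
  have hg2 : g 2 = 0 := by
    rw [hg0, hg1, zero_smul, zero_smul, zero_add, zero_add] at hg
    exact (smul_eq_zero.mp hg).resolve_right hne
  intro i
  fin_cases i
  exacts [hg0, hg1, hg2]

lemma exists_br_self_ne_zero (h2 : (2 : F) ≠ 0) (hd : Module.finrank F T = 3)
    (hann : ∀ x y z, L.br x y z ∈ AnnSet F L) (hnab : ¬ ∀ x y z, L.br x y z = 0) :
    ∃ u v, L.br u v u ≠ 0 := by
  push Not at hnab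
  obtain ⟨x, y, z, hxyz⟩ := hnab
  by_contra! h
  have hxyy : L.br x y y = 0 := neg_eq_zero.mp (L.br_swap x y y ▸ h y x)
  have hli := linearIndependent_br h2 hxyz (hann x y z)
  have : FiniteDimensional F T := Module.finite_of_finrank_eq_succ hd
  let B := basisOfLinearIndependentOfCardEqFinrank hli (by simp [hd])
  have hB : ⇑B = ![x, y, L.br x y z] := coe_basisOfLinearIndependentOfCardEqFinrank hli _
  have hz := B.sum_repr z
  simp only [Fin.sum_univ_three, hB, Matrix.cons_val_zero, Matrix.cons_val_one,
    Matrix.cons_val_two, Matrix.head_cons, Matrix.tail_cons] at hz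
  apply hxyz
  rw [← hz]
  simp only [L.add₃, L.smul₃, h, hxyy, LTS.br_right_eq_zero (hann x y z), smul_zero, add_zero]

lemma br_sub_smul_eq_of_br_eq_smul (h2 : (2 : F) ≠ 0) {u v : T} {γ : F}
    (hγ : L.br u v v = γ • L.br u v u) :
    L.br u (v - γ • u) u = L.br u v u ∧ L.br u (v - γ • u) (v - γ • u) = 0 := by
  refine ⟨?_, ?_⟩ <;>
    simp only [sub_eq_add_neg, ← neg_smul, L.add₂, L.add₃, L.smul₂, L.smul₃, L.br_self h2, hγ,
      smul_zero, add_zero]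
  module

lemma exists_basis_br_eq (h2 : (2 : F) ≠ 0) (hd : Module.finrank F T = 3)
    (hann : ∀ x y z, L.br x y z ∈ AnnSet F L) {f₁ f₂ : T} (hne : L.br f₁ f₂ f₁ ≠ 0)
    (h0 : L.br f₁ f₂ f₂ = 0) :
    ∃ B : Module.Basis (Fin 3) F T, ∀ i j k : Fin 3,
      L.br (B i) (B j) (B k) =
        if i = 0 ∧ j = 1 ∧ k = 0 then B 2
        else if i = 1 ∧ j = 0 ∧ k = 0 then -B 2
        else 0 := by
  have hli := linearIndependent_br h2 hne (hann f₁ f₂ f₁)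
  have : FiniteDimensional F T := Module.finite_of_finrank_eq_succ hd
  let B := basisOfLinearIndependentOfCardEqFinrank hli (by simp [hd])
  have hB : ⇑B = ![f₁, f₂, L.br f₁ f₂ f₁] := coe_basisOfLinearIndependentOfCardEqFinrank hli _
  have he := hann f₁ f₂ f₁
  refine ⟨B, fun i j k => ?_⟩
  fin_cases i <;> fin_cases j <;> fin_cases k <;>
    simp [hB, L.br_self h2, he _ _, LTS.br_mid_eq_zero he, LTS.br_right_eq_zero he, h0,
      L.br_swap f₁ f₂]

end NormalForm

theorem stmt13_general {F : Type*} [Field F] (h2 : (2 : F) ≠ 0)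
    {T : Type*} [AddCommGroup T] [Module F T]
    (hd : Module.finrank F T = 3) (L : LTS F T) (hnil : IsNilpotentLTS F L)
    (hnab : ¬ ∀ x y z, L.br x y z = 0) :
    ∃ B : Module.Basis (Fin 3) F T, ∀ i j k : Fin 3,
      L.br (B i) (B j) (B k) =
        if i = 0 ∧ j = 1 ∧ k = 0 then B 2
        else if i = 1 ∧ j = 0 ∧ k = 0 then -B 2
        else 0 := by
  have hD1 := derSeq_one_ne_bot hnab
  have hann := br_mem_annSet_of_derSeq_two_eq_bot (derSeq_two_eq_bot h2 hd hnil hD1)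
  obtain ⟨u, v, huv⟩ := exists_br_self_ne_zero h2 hd hann hnab
  obtain ⟨γ, hγ⟩ := Submodule.exists_smul_eq_of_finrank_eq_one
    (finrank_derSeq_one_eq_one h2 hd hnil hD1) (br_mem_derSeq_one u v u) huv
    (br_mem_derSeq_one u v v)
  obtain ⟨hne, h0⟩ := br_sub_smul_eq_of_br_eq_smul h2 hγ
  exact exists_basis_br_eq h2 hd hann (hne ▸ huv) h0

theorem stmt13 {F : Type*} [Field F] (h2 : (2 : F) ≠ 0)
    {T : Type*} [AddCommGroup T] [Module F T] [FiniteDimensional F T]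
    (hd : Module.finrank F T = 3) (L : LTS F T) (hnil : IsNilpotentLTS F L)
    (hnab : ¬ ∀ x y z, L.br x y z = 0) :
    ∃ B : Module.Basis (Fin 3) F T, ∀ i j k : Fin 3,
      L.br (B i) (B j) (B k) =
        if i = 0 ∧ j = 1 ∧ k = 0 then B 2
        else if i = 1 ∧ j = 0 ∧ k = 0 then -B 2
        else 0 :=
  stmt13_general h2 hd L hnil hnab
end
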